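/- arXiv:1711.06147 — 6 statements merged into one kernel-verified Lean document; each statement's English description precedes it below -/
import Mathlib

section
/- Let R be a commutative ring, n a positive integer, A, B ∈ Mₙ(R), and let T := fromBlocks 0 A B 0 be the corresponding 2n×2n block matrix. If h ∈ R[X] satisfies h(A·B) = 0, then T · h(T²) = 0; equivalently, the polynomial X · h(X²) annihilates T. In particular, over a field the minimal polynomial of T divides X · m(X²), where m is the minimal polynomial of A·B. -/
/-!
`T² = fromBlocks (A * B) 0 0 (B * A)`, so `T * h(T²) = fromBlocks 0 (A * h(B * A)) (B * h(A * B)) 0`.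
Here `h(A * B) = 0`, and `A * h(B * A) = h(A * B) * A = 0` because `A` semiconjugates `B * A`
to `A * B`, hence also every polynomial in `B * A` to the same polynomial in `A * B`.
-/

open Polynomial Matrix

theorem SemiconjBy.aeval {R S : Type*} [CommSemiring R] [Semiring S] [Algebra R S]
    {a x y : S} (h : SemiconjBy a x y) (p : R[X]) :
    SemiconjBy a (aeval x p) (aeval y p) := by
  induction p using Polynomial.induction_on' with
  | add p q hp hq => simpa only [map_add] using hp.add_right hq
  | monomial k r =>
    simpa only [aeval_monomial] using
      SemiconjBy.mul_right (Algebra.commute_algebraMap_right r a) (h.pow_right k)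

theorem mul_aeval_mul_comm {R S : Type*} [CommSemiring R] [Semiring S] [Algebra R S]
    (a b : S) (p : R[X]) : a * aeval (b * a) p = aeval (a * b) p * a :=
  SemiconjBy.aeval (mul_assoc a b a).symm p

theorem aeval_X_mul_comp_X_sq {R S : Type*} [CommSemiring R] [Semiring S] [Algebra R S]
    (x : S) (p : R[X]) : aeval x (X * p.comp (X ^ 2)) = x * aeval (x ^ 2) p := by
  rw [map_mul, aeval_X, aeval_comp, map_pow, aeval_X]

namespace Matrix

variable {R m n : Type*} [CommSemiring R] [Fintype m] [Fintype n] [DecidableEq m] [DecidableEq n]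

theorem aeval_fromBlocks_zero_zero (M : Matrix m m R) (N : Matrix n n R) (p : R[X]) :
    aeval (fromBlocks M 0 0 N) p = fromBlocks (aeval M p) 0 0 (aeval N p) := by
  induction p using Polynomial.induction_on' with
  | add p q hp hq => simp only [map_add, hp, hq, fromBlocks_add, add_zero]
  | monomial k r =>
    simp only [aeval_monomial, fromBlocks_diagonal_pow, Algebra.algebraMap_eq_smul_one,
      smul_mul_assoc, one_mul, fromBlocks_smul, smul_zero]

theorem fromBlocks_zero_zero_sq (A : Matrix m n R) (B : Matrix n m R) :
    fromBlocks 0 A B 0 ^ 2 = fromBlocks (A * B) 0 0 (B * A) := by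
  simp [sq, fromBlocks_multiply]

theorem fromBlocks_zero_zero_mul_aeval_sq_eq_zero {A B : Matrix n n R} {p : R[X]}
    (hp : aeval (A * B) p = 0) : fromBlocks 0 A B 0 * aeval (fromBlocks 0 A B 0 ^ 2) p = 0 := by
  have hA : A * aeval (B * A) p = 0 := by rw [mul_aeval_mul_comm, hp, zero_mul]
  simp [fromBlocks_zero_zero_sq, aeval_fromBlocks_zero_zero, hp, hA, fromBlocks_multiply]

end Matrix

/-- Let `T = fromBlocks 0 A B 0`.  If `h(A·B) = 0` then `T · h(T²) = 0`; equivalently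
the polynomial `X · h(X²)` annihilates `T`.  In particular, over a field the minimal
polynomial of `T` divides `X · m(X²)` where `m` is the minimal polynomial of `A·B`. -/
theorem fromBlocks_annihilating :
    (∀ (R : Type*) [CommRing R] (n : ℕ), 0 < n →
      ∀ (A B : Matrix (Fin n) (Fin n) R) (h : Polynomial R),
        Polynomial.aeval (A * B) h = 0 →
          (Matrix.fromBlocks 0 A B 0) *
              Polynomial.aeval ((Matrix.fromBlocks 0 A B 0) ^ 2) h = 0 ∧
          Polynomial.aeval (Matrix.fromBlocks 0 A B 0)
              (Polynomial.X * h.comp (Polynomial.X ^ 2)) = 0) ∧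
    (∀ (K : Type*) [Field K] (n : ℕ), 0 < n →
      ∀ (A B : Matrix (Fin n) (Fin n) K),
        minpoly K (Matrix.fromBlocks 0 A B 0) ∣
          Polynomial.X * (minpoly K (A * B)).comp (Polynomial.X ^ 2)) := by
  refine ⟨fun R _ n _ A B h hAB => ?_, fun K _ n _ A B => ?_⟩
  · have hT := fromBlocks_zero_zero_mul_aeval_sq_eq_zero hAB
    exact ⟨hT, by rwa [aeval_X_mul_comp_X_sq]⟩
  · apply minpoly.dvd
    rw [aeval_X_mul_comp_X_sq]
    exact fromBlocks_zero_zero_mul_aeval_sq_eq_zero (minpoly.aeval K (A * B))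
end

section
/- Let R be a commutative ring, n a positive integer, and A ∈ Mₙ(R). Set T := fromBlocks 0 A (−A^⋆) 0, a 2n×2n matrix. Then the characteristic polynomial of T equals f composed with X², i.e. charpoly(T) = f.comp(X²), where f := charpoly(−A·A^⋆). -/
open Polynomial Matrix

/-- The `n × n` antidiagonal permutation matrix `J`: with 1-based indexing,
`J i j = 1` if `i + j = n + 1` and `0` otherwise. -/
def antidiagJ (R : Type*) [CommRing R] (n : ℕ) : Matrix (Fin n) (Fin n) R :=
  Matrix.of fun i j => if (i : ℕ) + (j : ℕ) + 2 = n + 1 then 1 else 0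

/-- The reflection `M^⋆ = J * Mᵀ * J` of a square matrix about its antidiagonal. -/
def astar {R : Type*} [CommRing R] {n : ℕ} (M : Matrix (Fin n) (Fin n) R) :
    Matrix (Fin n) (Fin n) R :=
  antidiagJ R n * Mᵀ * antidiagJ R n

/-!
Since `X • 1` commutes with every block, `charmatrix (fromBlocks 0 B C 0)` has determinant
`det (X² • 1 - B * C)`: multiplying on the right by `fromBlocks (X • 1) 0 (-C) 1` makes it block
triangular, and the extra factor `Xⁿ` cancels because `X` is a non-zero-divisor. With `B = A` and
`C = -A^⋆` this is `charpoly (-(A * A^⋆))` evaluated at `X²`.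
-/

namespace Matrix

variable {n α R : Type*} [Fintype n] [DecidableEq n] [CommRing α] [CommRing R]

theorem det_fromBlocks_scalar_mul_pow (a : α) (B C : Matrix n n α) :
    (fromBlocks (scalar n a) B C (scalar n a)).det * a ^ Fintype.card n =
      (scalar n (a ^ 2) - B * C).det * a ^ Fintype.card n := by
  have hprod : fromBlocks (scalar n a) B C (scalar n a) * fromBlocks (scalar n a) 0 (-C) 1 =
      fromBlocks (scalar n (a ^ 2) - B * C) B 0 (scalar n a) := by
    rw [fromBlocks_multiply, ← map_mul, ← pow_two, ← (scalar_commute a (Commute.all a) C).eq]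
    simp [sub_eq_add_neg]
  simpa [det_fromBlocks_zero₁₂, det_fromBlocks_zero₂₁] using congrArg det hprod

theorem det_fromBlocks_scalar {a : α} (ha : IsRegular a) (B C : Matrix n n α) :
    (fromBlocks (scalar n a) B C (scalar n a)).det = (scalar n (a ^ 2) - B * C).det :=
  (ha.pow _).right.eq_iff.mp (det_fromBlocks_scalar_mul_pow a B C)

theorem charpoly_comp_eq_det (M : Matrix n n R) (q : R[X]) :
    M.charpoly.comp q = (scalar n q - M.map C).det := by
  rw [charpoly, Polynomial.comp, ← coe_eval₂RingHom, RingHom.map_det]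
  congr 1
  ext i j
  by_cases h : i = j <;> simp [h, charmatrix]

theorem charpoly_fromBlocks_zero_zero (B C : Matrix n n R) :
    (fromBlocks 0 B C 0).charpoly = (B * C).charpoly.comp (X ^ 2) := by
  rw [charpoly, charmatrix_fromBlocks, charmatrix_zero, det_fromBlocks_scalar isRegular_X,
    charpoly_comp_eq_det, neg_mul_neg, Matrix.map_mul]

end Matrix

theorem charpoly_fromBlocks_eq_comp_general (R : Type*) [CommRing R] (n : ℕ)
    (A : Matrix (Fin n) (Fin n) R) :
    (Matrix.fromBlocks 0 A (-(astar A)) 0).charpoly =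
      (-(A * astar A)).charpoly.comp (Polynomial.X ^ 2) := by
  rw [charpoly_fromBlocks_zero_zero, mul_neg]

/-- For `T = fromBlocks 0 A (−A^⋆) 0`, the characteristic polynomial of `T` is
`f(X²)` where `f` is the characteristic polynomial of `−A·A^⋆`. -/
theorem charpoly_fromBlocks_eq_comp (R : Type*) [CommRing R] (n : ℕ) (hn : 0 < n)
    (A : Matrix (Fin n) (Fin n) R) :
    (Matrix.fromBlocks 0 A (-(astar A)) 0).charpoly =
      (-(A * astar A)).charpoly.comp (Polynomial.X ^ 2) :=
  charpoly_fromBlocks_eq_comp_general R n A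
end

section
/- Let K be a field and let T = fromBlocks A C 0 B be a block upper-triangular square matrix over K, where A is m×m, B is n×n and C is m×n. If T is regular (its minimal polynomial equals its characteristic polynomial), then both A and B are regular. -/
/-!
Every polynomial in `T = fromBlocks A C 0 B` is again block upper triangular, with diagonal
blocks the same polynomial in `A` and in `B`. Hence `minpoly A * minpoly B` annihilates `T`, so
`charpoly T = charpoly A * charpoly B` divides `minpoly A * minpoly B`; comparing degrees with
`minpoly A ∣ charpoly A` and `minpoly B ∣ charpoly B` forces both divisibilities to be equalities.
-/

open Polynomial Matrix

namespace Polynomial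

theorem Monic.eq_and_eq_of_dvd_of_mul_dvd_mul {R : Type*} [CommRing R] [IsDomain R]
    {p q P Q : R[X]} (hp : p.Monic) (hq : q.Monic) (hP : P.Monic) (hQ : Q.Monic)
    (hpP : p ∣ P) (hqQ : q ∣ Q) (h : P * Q ∣ p * q) : p = P ∧ q = Q := by
  have hdeg := natDegree_le_of_dvd h (hp.mul hq).ne_zero
  have hpP' := natDegree_le_of_dvd hpP hP.ne_zero
  have hqQ' := natDegree_le_of_dvd hqQ hQ.ne_zero
  rw [hP.natDegree_mul hQ, hp.natDegree_mul hq] at hdeg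
  exact ⟨(eq_of_monic_of_dvd_of_natDegree_le hp hP hpP (by omega)).symm,
    (eq_of_monic_of_dvd_of_natDegree_le hq hQ hqQ (by omega)).symm⟩

end Polynomial

namespace Matrix

variable {R m n : Type*} [CommSemiring R] [Fintype m] [Fintype n]

theorem fromBlocks_zero₂₁_mul (A A' : Matrix m m R) (B B' : Matrix n n R) (C C' : Matrix m n R) :
    fromBlocks A C 0 B * fromBlocks A' C' 0 B' =
      fromBlocks (A * A') (A * C' + C * B') 0 (B * B') := by
  simp [fromBlocks_multiply]

variable [DecidableEq m] [DecidableEq n]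

theorem exists_aeval_fromBlocks_zero₂₁ (A : Matrix m m R) (B : Matrix n n R) (C : Matrix m n R)
    (p : R[X]) : ∃ D, aeval (fromBlocks A C 0 B) p = fromBlocks (aeval A p) D 0 (aeval B p) := by
  induction p using Polynomial.induction_on with
  | C a => exact ⟨0, by simp [Algebra.algebraMap_eq_smul_one, ← fromBlocks_one, fromBlocks_smul]⟩
  | add p q hp hq =>
    obtain ⟨D, hD⟩ := hp
    obtain ⟨D', hD'⟩ := hq
    exact ⟨D + D', by simp [hD, hD', fromBlocks_add]⟩
  | monomial k a ih =>
    obtain ⟨D, hD⟩ := ih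
    refine ⟨aeval A (Polynomial.C a * X ^ k) * C + D * B, ?_⟩
    simp only [pow_succ, ← mul_assoc, map_mul, aeval_X, hD, fromBlocks_zero₂₁_mul]

theorem aeval_fromBlocks_zero₂₁_mul_eq_zero (A : Matrix m m R) (B : Matrix n n R)
    (C : Matrix m n R) {p q : R[X]} (hp : aeval A p = 0) (hq : aeval B q = 0) :
    aeval (fromBlocks A C 0 B) (p * q) = 0 := by
  obtain ⟨D, hD⟩ := exists_aeval_fromBlocks_zero₂₁ A B C p
  obtain ⟨D', hD'⟩ := exists_aeval_fromBlocks_zero₂₁ A B C q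
  simp [hD, hD', hp, hq, fromBlocks_zero₂₁_mul]

theorem minpoly_fromBlocks_zero₂₁_dvd {K : Type*} [Field K] (A : Matrix m m K)
    (B : Matrix n n K) (C : Matrix m n K) :
    minpoly K (fromBlocks A C 0 B) ∣ minpoly K A * minpoly K B :=
  minpoly.dvd _ _ <|
    aeval_fromBlocks_zero₂₁_mul_eq_zero A B C (minpoly.aeval K A) (minpoly.aeval K B)

end Matrix

/-- If a block upper-triangular matrix `fromBlocks A C 0 B` over a field is regular
(its minimal polynomial equals its characteristic polynomial), then both diagonal
blocks `A` and `B` are regular. -/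
theorem regular_blocks_of_regular_blockTriangular (K : Type*) [Field K] (m n : ℕ)
    (A : Matrix (Fin m) (Fin m) K) (B : Matrix (Fin n) (Fin n) K)
    (C : Matrix (Fin m) (Fin n) K)
    (hT : minpoly K (Matrix.fromBlocks A C 0 B) =
      (Matrix.fromBlocks A C 0 B).charpoly) :
    minpoly K A = A.charpoly ∧ minpoly K B = B.charpoly := by
  have hdvd := minpoly_fromBlocks_zero₂₁_dvd A B C
  rw [hT, charpoly_fromBlocks_zero₂₁] at hdvd
  exact (minpoly.monic A.isIntegral).eq_and_eq_of_dvd_of_mul_dvd_mul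
    (minpoly.monic B.isIntegral) A.charpoly_monic B.charpoly_monic
    A.minpoly_dvd_charpoly B.minpoly_dvd_charpoly hdvd
end

section
/- Let k be a field of characteristic different from 2 and let f = ∏_{i=1}^{r+1} (X − α_i)^{m_i} ∈ k[X] be of odd degree, where α_1, …, α_{r+1} ∈ k are pairwise distinct and each m_i ≥ 1. Let L := k[X]/(f) and let N : L → k be the algebra norm (the determinant of multiplication by the given element on the finite free k-module L). Then the number of u ∈ L with u² = 1 and N(u) = 1 is exactly 2^r. -/
open Polynomial

section Aux
variable {k : Type*} [Field k]

theorem detProdMap {M N : Type*} [AddCommGroup M] [Module k M] [AddCommGroup N]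
    [Module k N] [Module.Finite k M] [Module.Finite k N] (φ : M →ₗ[k] M) (ψ : N →ₗ[k] N) :
    (φ.prodMap ψ).det = φ.det * ψ.det := by
  classical
  let bM := Module.Free.chooseBasis k M
  let bN := Module.Free.chooseBasis k N
  rw [← LinearMap.det_toMatrix (bM.prod bN), LinearMap.toMatrix_prodMap,
    Matrix.det_fromBlocks_zero₂₁, LinearMap.det_toMatrix, LinearMap.det_toMatrix]

theorem normProd {A B : Type*} [CommRing A] [CommRing B] [Algebra k A] [Algebra k B]
    [Module.Finite k A] [Module.Finite k B] (x : A × B) :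
    Algebra.norm k x = Algebra.norm k x.1 * Algebra.norm k x.2 := by
  rw [Algebra.norm_apply, Algebra.norm_apply, Algebra.norm_apply, ← detProdMap]
  congr 1

/-- Splitting off one factor of a pi algebra. -/
def piSplitAlgEquiv {ι : Type*} [DecidableEq ι] (A : ι → Type*) [∀ i, Semiring (A i)]
    [∀ i, Algebra k (A i)] (i : ι) :
    (∀ j, A j) ≃ₐ[k] A i × (∀ j : {j // j ≠ i}, A j) :=
  { Equiv.piSplitAt i A with
    map_mul' := fun _ _ => rfl
    map_add' := fun _ _ => rfl
    commutes' := fun _ => rfl }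

theorem normPi {ι : Type*} [Fintype ι] [DecidableEq ι] (A : ι → Type*) [∀ i, CommRing (A i)]
    [∀ i, Algebra k (A i)] [∀ i, Module.Finite k (A i)] (x : ∀ i, A i) :
    Algebra.norm k x = ∏ i, Algebra.norm k (x i) := by
  have key : ∀ (i : ι) (a : A i),
      Algebra.norm k (Function.update (1 : ∀ j, A j) i a) = Algebra.norm k a := by
    intro i a
    rw [← Algebra.norm_eq_of_algEquiv (piSplitAlgEquiv A i)]
    have h1 : (piSplitAlgEquiv (k := k) A i) (Function.update (1 : ∀ j, A j) i a)
        = (a, (1 : ∀ j : {j // j ≠ i}, A j)) := by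
      refine Prod.ext ?_ ?_
      · simp [piSplitAlgEquiv, Equiv.piSplitAt]
      · funext j
        simp [piSplitAlgEquiv, Equiv.piSplitAt, Function.update_of_ne j.2]
    rw [h1, normProd, map_one, mul_one]
  have hx : x = ∏ i, Function.update (1 : ∀ j, A j) i (x i) := by
    funext j
    rw [Finset.prod_apply, Finset.prod_eq_single j (fun i _ hij => ?_) (by simp)]
    · simp
    · exact Function.update_of_ne (Ne.symm hij) _ _
  calc Algebra.norm k x = Algebra.norm k (∏ i, Function.update (1 : ∀ j, A j) i (x i)) := by
        rw [← hx]
    _ = ∏ i, Algebra.norm k (Function.update (1 : ∀ j, A j) i (x i)) := map_prod _ _ _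
    _ = ∏ i, Algebra.norm k (x i) := Finset.prod_congr rfl fun i _ => key i (x i)

/-- Sign function `ZMod 2 → k`. -/
def sgn (k : Type*) [Field k] : ZMod 2 → k := fun c => if c = 0 then 1 else -1

lemma zmod2_cases (c : ZMod 2) : c = 0 ∨ c = 1 := by revert c; decide

lemma sgn_zero : sgn k 0 = 1 := rfl

lemma sgn_one : sgn k 1 = -1 := rfl

lemma sgn_add (a b : ZMod 2) : sgn k (a + b) = sgn k a * sgn k b := by
  rcases zmod2_cases a with ha | ha <;> rcases zmod2_cases b with hb | hb <;>
    subst ha <;> subst hb <;>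
    simp [sgn, show (1 + 1 : ZMod 2) = 0 from rfl]

lemma sgn_pow (c : ZMod 2) (n : ℕ) : sgn k c ^ n = sgn k ((n : ZMod 2) * c) := by
  induction n with
  | zero => simp [sgn_zero]
  | succ n ih =>
    rw [pow_succ, ih, ← sgn_add]
    push_cast
    ring_nf

lemma sgn_sum {ι : Type*} (s : Finset ι) (x : ι → ZMod 2) :
    sgn k (∑ i ∈ s, x i) = ∏ i ∈ s, sgn k (x i) := by
  classical
  induction s using Finset.induction_on with
  | empty => simp [sgn_zero]
  | insert _ _ hni ih => simp [Finset.sum_insert hni, Finset.prod_insert hni, sgn_add, ih]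

lemma sgn_ne_one (hchar : ringChar k ≠ 2) : sgn k 1 ≠ 1 := by
  simpa [sgn] using (Ring.neg_one_ne_one_of_char_ne_two hchar)

lemma sgn_sq (c : ZMod 2) : sgn k c ^ 2 = 1 := by
  rcases zmod2_cases c with h | h <;> subst h <;> simp [sgn]

theorem card_ker (r : ℕ) (m : Fin (r + 1) → ℕ) (i₀ : Fin (r + 1))
    (hodd : (m i₀ : ZMod 2) = 1) :
    Nat.card {σ : Fin (r + 1) → ZMod 2 // ∑ i, (m i : ZMod 2) * σ i = 0} = 2 ^ r := by
  classical
  set φ : (Fin (r + 1) → ZMod 2) →+ ZMod 2 :=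
    AddMonoidHom.mk' (fun σ => ∑ i, (m i : ZMod 2) * σ i)
      (by intro a b; simp [mul_add, Finset.sum_add_distrib]) with hφ
  have hsurj : Function.Surjective φ := by
    intro c
    refine ⟨Pi.single i₀ c, ?_⟩
    rw [hφ]
    simp only [AddMonoidHom.mk'_apply]
    rw [Finset.sum_eq_single i₀ (fun i _ hi => by simp [Pi.single_eq_of_ne hi]) (by simp)]
    simp [hodd]
  have h1 : Nat.card {σ : Fin (r + 1) → ZMod 2 // ∑ i, (m i : ZMod 2) * σ i = 0}
      = Nat.card φ.ker := by
    apply Nat.card_congr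
    exact Equiv.subtypeEquivRight (fun σ => by simp [hφ, AddMonoidHom.mem_ker])
  rw [h1]
  have h2 : Nat.card ((Fin (r + 1) → ZMod 2) ⧸ φ.ker) = 2 := by
    rw [Nat.card_congr (QuotientAddGroup.quotientKerEquivOfSurjective φ hsurj).toEquiv]
    simp [Nat.card_eq_fintype_card]
  have h3 := AddSubgroup.card_eq_card_quotient_mul_card_addSubgroup (φ.ker)
  rw [h2] at h3
  have h4 : Nat.card (Fin (r + 1) → ZMod 2) = 2 ^ (r + 1) := by
    simp [Nat.card_eq_fintype_card]
  rw [h4, pow_succ] at h3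
  have h5 : 2 * Nat.card φ.ker = 2 * 2 ^ r := by rw [← h3]; ring
  exact Nat.eq_of_mul_eq_mul_left (by norm_num) h5

end Aux

/-- Over a field `k` of characteristic `≠ 2`, if
`f = ∏ i (X − α i) ^ (m i)` has odd degree, with the `α i` pairwise distinct and all
`m i ≥ 1`, and if `N : k[X]/(f) → k` denotes the algebra norm, then the number of
`u ∈ k[X]/(f)` with `u² = 1` and `N u = 1` is exactly `2^r`. -/
theorem card_norm_one_sqrt_one_quotient (k : Type*) [Field k] (hchar : ringChar k ≠ 2)
    (r : ℕ) (α : Fin (r + 1) → k) (hα : Function.Injective α)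
    (m : Fin (r + 1) → ℕ) (hm : ∀ i, 1 ≤ m i)
    (f : Polynomial k)
    (hf : f = ∏ i, (Polynomial.X - Polynomial.C (α i)) ^ m i)
    (hodd : Odd f.natDegree) :
    Nat.card {u : Polynomial k ⧸ Ideal.span {f} //
      u ^ 2 = 1 ∧ Algebra.norm k u = 1} = 2 ^ r := by
  classical
  set g : Fin (r + 1) → Polynomial k := fun i => (X - C (α i)) ^ m i with hgdef
  have hg0 : ∀ i, g i ≠ 0 := fun i => pow_ne_zero _ (X_sub_C_ne_zero (α i))
  have hcop : ∀ i j, i ≠ j → IsCoprime (g i) (g j) := fun i j hij =>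
    ((Polynomial.pairwise_coprime_X_sub_C hα hij).pow)
  have hspan : Ideal.span {f} = ⨅ i, Ideal.span {g i} := by
    rw [Ideal.iInf_span_singleton hcop, hf]
  have hIcop : Pairwise (Function.onFun IsCoprime fun i => Ideal.span {g i}) := fun i j hij =>
    (Ideal.isCoprime_span_singleton_iff _ _).mpr (hcop i j hij)
  let A : Fin (r + 1) → Type _ := fun i => AdjoinRoot (g i)
  let pb : ∀ i, PowerBasis k (A i) := fun i => AdjoinRoot.powerBasis (hg0 i)
  haveI hfin : ∀ i, Module.Finite k (A i) := fun i => Module.Finite.of_basis (pb i).basis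
  have hdim : ∀ i, (pb i).dim = m i := by
    intro i
    show (g i).natDegree = m i
    rw [hgdef]
    simp [natDegree_pow]
  have hrank : ∀ i, Module.finrank k (A i) = m i := fun i => by
    rw [(pb i).finrank, hdim i]
  have hnt : ∀ i, Nontrivial (A i) :=
    fun i => nontrivial_of_ne ((pb i).basis ⟨0, by rw [hdim i]; exact hm i⟩) 0
      (Module.Basis.ne_zero _ _)
  have h2k : (2 : k) ≠ 0 := Ring.two_ne_zero hchar
  have hne : ∀ i, (1 : A i) ≠ -1 := by
    intro i h
    haveI := hnt i
    have h20 : (2 : A i) = 0 := by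
      rw [← one_add_one_eq_two]
      nth_rewrite 2 [h]
      exact add_neg_cancel 1
    have h2 : (algebraMap k (A i)) 2 = (algebraMap k (A i)) 0 := by
      rw [map_ofNat, map_zero, h20]
    exact h2k ((algebraMap k (A i)).injective h2)
  -- the CRT algebra equivalence
  let E : (Polynomial k ⧸ Ideal.span {f}) ≃+* ∀ i, A i :=
    (Ideal.quotEquivOfEq hspan).trans (Ideal.quotientInfRingEquivPiQuotient _ hIcop)
  let e : (Polynomial k ⧸ Ideal.span {f}) ≃ₐ[k] ∀ i, A i :=
    AlgEquiv.ofRingEquiv (f := E) (fun c => rfl)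
  -- square roots of one in each factor
  have hpm : ∀ (i) (v : A i), v ^ 2 = 1 → v = 1 ∨ v = -1 := by
    intro i v hv
    obtain ⟨p, rfl⟩ := AdjoinRoot.mk_surjective v
    have hdvd : g i ∣ (p - 1) * (p + 1) := by
      have h0 : AdjoinRoot.mk (g i) ((p - 1) * (p + 1)) = 0 := by
        rw [map_mul, map_sub, map_add, map_one]
        have : (AdjoinRoot.mk (g i) p - 1) * (AdjoinRoot.mk (g i) p + 1)
            = (AdjoinRoot.mk (g i) p) ^ 2 - 1 := by ring
        rw [this, hv, sub_self]
      rwa [AdjoinRoot.mk_eq_zero] at h0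
    have hprime : Prime (X - C (α i)) := prime_X_sub_C (α i)
    have hnotboth : ¬((X - C (α i)) ∣ (p - 1) ∧ (X - C (α i)) ∣ (p + 1)) := by
      rintro ⟨h1, h2⟩
      have hd2 : (X - C (α i)) ∣ (2 : Polynomial k) :=
        (by ring : p + 1 - (p - 1) = 2) ▸ dvd_sub h2 h1
      have hu : IsUnit (2 : Polynomial k) := by
        rw [← map_ofNat (C : k →+* Polynomial k) 2]
        exact Polynomial.isUnit_C.mpr (isUnit_iff_ne_zero.mpr h2k)
      exact hprime.not_unit (isUnit_of_dvd_unit hd2 hu)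
    have hgi : g i = (X - C (α i)) ^ m i := rfl
    by_cases hd : (X - C (α i)) ∣ (p - 1)
    · left
      have hdvd1 : g i ∣ p - 1 := by
        rw [hgi]
        exact hprime.pow_dvd_of_dvd_mul_right (m i)
          (fun hc => hnotboth ⟨hd, hc⟩) (hgi ▸ hdvd)
      have : AdjoinRoot.mk (g i) (p - 1) = 0 := AdjoinRoot.mk_eq_zero.mpr hdvd1
      rw [map_sub, map_one, sub_eq_zero] at this
      exact this
    · right
      have hdvd1 : g i ∣ p + 1 := by
        rw [hgi]
        exact hprime.pow_dvd_of_dvd_mul_left (m i) hd (hgi ▸ hdvd)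
      have : AdjoinRoot.mk (g i) (p + 1) = 0 := AdjoinRoot.mk_eq_zero.mpr hdvd1
      rw [map_add, map_one] at this
      exact eq_neg_of_add_eq_zero_left this
  -- norms of ±1 in each factor
  have hNone : ∀ i, Algebra.norm k (1 : A i) = 1 := fun i => map_one _
  have hNneg : ∀ i, Algebra.norm k (-1 : A i) = (-1 : k) ^ m i := by
    intro i
    have h1 : (-1 : A i) = algebraMap k (A i) (-1) := by rw [map_neg, map_one]
    rw [h1, Algebra.norm_algebraMap, hrank]
  have hNalg : ∀ (i) (c : k), Algebra.norm k (algebraMap k (A i) c) = c ^ m i := by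
    intro i c
    rw [Algebra.norm_algebraMap, hrank]
  -- norm via the product decomposition
  have hnorm : ∀ u : Polynomial k ⧸ Ideal.span {f},
      Algebra.norm k u = ∏ i, Algebra.norm k (e u i) := by
    intro u
    rw [← Algebra.norm_eq_of_algEquiv e u, normPi]
  -- components of square roots of one
  have hsq : ∀ u : {u : Polynomial k ⧸ Ideal.span {f} // u ^ 2 = 1 ∧ Algebra.norm k u = 1},
      ∀ i, e u.1 i = 1 ∨ e u.1 i = -1 := by
    intro u i
    apply hpm
    have h2 : (e u.1) ^ 2 = 1 := by rw [← map_pow, u.2.1, map_one]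
    calc (e u.1 i) ^ 2 = ((e u.1) ^ 2) i := rfl
      _ = 1 := by rw [h2]; rfl
  -- existence of an odd multiplicity
  have hdeg : f.natDegree = ∑ i, m i := by
    rw [hf, natDegree_prod _ _ (fun i _ => pow_ne_zero _ (X_sub_C_ne_zero (α i)))]
    simp [natDegree_pow]
  have hodd' : ∃ i₀, (m i₀ : ZMod 2) = 1 := by
    by_contra hcon
    push_neg at hcon
    have hz : ∀ i, (m i : ZMod 2) = 0 := fun i => (zmod2_cases _).resolve_right (hcon i)
    have h1 : ((f.natDegree : ℕ) : ZMod 2) = 1 := by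
      rcases hodd with ⟨t, ht⟩
      rw [ht]
      push_cast
      simp [show (2 : ZMod 2) = 0 from rfl]
    rw [hdeg] at h1
    push_cast at h1
    rw [Finset.sum_congr rfl (fun i _ => hz i)] at h1
    simp at h1
  obtain ⟨i₀, hi₀⟩ := hodd'
  rw [← card_ker r m i₀ hi₀]
  apply Nat.card_congr
  refine ⟨fun u => ⟨fun i => if e u.1 i = 1 then 0 else 1, ?_⟩,
    fun σ => ⟨e.symm (fun i => algebraMap k (A i) (sgn k (σ.1 i))), ?_, ?_⟩, ?_, ?_⟩
  · -- forward: the sum vanishes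
    have hval : Algebra.norm k u.1
        = ∏ i, sgn k ((m i : ZMod 2) * (if e u.1 i = 1 then 0 else 1)) := by
      rw [hnorm]
      refine Finset.prod_congr rfl fun i _ => ?_
      rcases hsq u i with h | h
      · rw [if_pos h, mul_zero, sgn_zero, h]
        exact map_one _
      · have hne1 : e u.1 i ≠ 1 := by rw [h]; exact fun hh => (hne i) hh.symm
        rw [if_neg hne1, ← sgn_pow, sgn_one, h]
        exact hNneg i
    rw [u.2.2, ← sgn_sum] at hval
    rcases zmod2_cases (∑ i, (m i : ZMod 2) * (if e u.1 i = 1 then 0 else 1)) with h0 | h0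
    · exact h0
    · rw [h0] at hval
      exact absurd hval.symm (sgn_ne_one hchar)
  · -- backward: square is one
    have hv : (fun i => algebraMap k (A i) (sgn k (σ.1 i))) ^ 2
        = (1 : ∀ i, A i) := by
      funext i
      show (algebraMap k (A i) (sgn k (σ.1 i))) ^ 2 = 1
      rw [← map_pow, sgn_sq, map_one]
    calc (e.symm fun i => algebraMap k (A i) (sgn k (σ.1 i))) ^ 2
        = e.symm ((fun i => algebraMap k (A i) (sgn k (σ.1 i))) ^ 2) :=
          (map_pow _ _ _).symm
      _ = 1 := by rw [hv, map_one]
  · -- backward: the norm is one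
    rw [hnorm]
    calc ∏ i, Algebra.norm k
          ((e (e.symm fun j => algebraMap k (A j) (sgn k (σ.1 j)))) i)
        = ∏ i, sgn k ((m i : ZMod 2) * σ.1 i) := by
          rw [e.apply_symm_apply]
          exact Finset.prod_congr rfl fun i _ => by rw [hNalg, sgn_pow]
      _ = sgn k (∑ i, (m i : ZMod 2) * σ.1 i) := (sgn_sum _ _).symm
      _ = 1 := by rw [σ.2, sgn_zero]
  · -- left inverse
    intro u
    apply Subtype.ext
    show e.symm (fun i => algebraMap k (A i)
      (sgn k (if e u.1 i = 1 then 0 else 1))) = u.1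
    rw [AlgEquiv.symm_apply_eq]
    funext i
    rcases hsq u i with h | h
    · rw [if_pos h, sgn_zero, map_one, h]
    · have hne1 : e u.1 i ≠ 1 := by rw [h]; exact fun hh => (hne i) hh.symm
      rw [if_neg hne1, sgn_one, map_neg, map_one, h]
  · -- right inverse
    intro σ
    apply Subtype.ext
    funext i
    show (if (e (e.symm fun j => algebraMap k (A j) (sgn k (σ.1 j)))) i = 1
      then (0 : ZMod 2) else 1) = σ.1 i
    rw [e.apply_symm_apply]
    rcases zmod2_cases (σ.1 i) with h | h
    · rw [h]
      simp [sgn_zero]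
    · rw [h, sgn_one, map_neg, map_one,
        if_neg (fun hh => (hne i) hh.symm)]
end

section
/- Let R be a discrete valuation ring with uniformizer π and let f = X^{2n+1} + a_{2n}X^{2n} + ⋯ + a₁X + a₀ ∈ R[X] be a monic polynomial of odd degree 2n+1 (n ≥ 1) such that π divides a₁ and π² divides a₀. Then π² divides Res(f, f'), the resultant of f and its derivative f'. -/
open Polynomial

/-- The Sylvester matrix of `f` and `g`, viewed as polynomials of degree (at most)
`m` and `n` respectively: an `(m+n) × (m+n)` matrix whose first `n` rows are the
shifted coefficient vectors of `f` and whose last `m` rows are the shifted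
coefficient vectors of `g`. -/
def sylvester {R : Type*} [CommRing R] (m n : ℕ) (f g : Polynomial R) :
    Matrix (Fin (m + n)) (Fin (m + n)) R :=
  Matrix.of fun i j =>
    if (i : ℕ) < n then
      (if (i : ℕ) ≤ (j : ℕ) ∧ (j : ℕ) ≤ (i : ℕ) + m then f.coeff (m + i - j) else 0)
    else
      (if (i : ℕ) - n ≤ (j : ℕ) ∧ (j : ℕ) ≤ ((i : ℕ) - n) + n then
        g.coeff (n + ((i : ℕ) - n) - j) else 0)

/-- The resultant of `f` and `g` (of degrees `m` and `n`), the determinant of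
their Sylvester matrix. -/
def resultant {R : Type*} [CommRing R] (m n : ℕ) (f g : Polynomial R) : R :=
  (sylvester m n f g).det

/-! The Sylvester matrix above is Mathlib's `Polynomial.sylvester` transposed, with rows and
columns listed in reverse order, so the two resultants agree.

Multiplicativity of the resultant gives `Res(X u, g) = g(0) Res(u, g)`; as `f ≡ X · f.divX`
modulo `f(0)`, this yields `Res(f, g) ≡ g(0) Res(f.divX, g) (mod f(0))`. For `g = f'` both `g(0)`
and `f.divX(0)` equal `a₁`, so applying the congruence once more shows `π ∣ Res(f.divX, f')`, and
then `Res(f, f') ≡ a₁ Res(f.divX, f') ≡ 0` modulo `π²`. -/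

theorem sylvester_eq_transpose_submatrix_rev {R : Type*} [CommRing R] (m n : ℕ)
    (f g : R[X]) :
    sylvester m n f g = ((f.sylvester g m n).submatrix Fin.revPerm Fin.revPerm).transpose := by
  ext i j
  obtain ⟨i, rfl⟩ := Fin.rev_surjective i
  induction i using Fin.addCases <;>
    simp only [_root_.sylvester, Polynomial.sylvester, Matrix.transpose_apply,
      Matrix.submatrix_apply, Matrix.of_apply, Fin.revPerm_apply, Fin.rev_rev, Fin.val_rev,
      Fin.addCases_left, Fin.addCases_right, Fin.val_castAdd, Fin.val_natAdd, Set.mem_Icc] <;>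
    split_ifs <;> first | rfl | omega | (congr 1; omega)

theorem resultant_eq_polynomial_resultant {R : Type*} [CommRing R] (m n : ℕ) (f g : R[X]) :
    resultant m n f g = f.resultant g m n := by
  rw [_root_.resultant, sylvester_eq_transpose_submatrix_rev, Matrix.det_transpose,
    Matrix.det_submatrix_equiv_self Fin.revPerm]
  rfl

namespace Polynomial

variable {R : Type*} [CommRing R]

theorem resultant_X_mul_left {u g : R[X]} {m n : ℕ} (hu : u.natDegree ≤ m)
    (hg : g.natDegree ≤ n) :
    (X * u).resultant g (m + 1) n = g.coeff 0 * u.resultant g m n := by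
  nontriviality R
  obtain rfl | hu0 := eq_or_ne u 0
  · rw [mul_zero, resultant_zero_left, resultant_zero_left]
    ring
  have hXu :
      (X * u).resultant g (u.natDegree + 1) n = g.coeff 0 * u.resultant g u.natDegree n := by
    have := resultant_mul_left X u g n hg
    rwa [natDegree_X, add_comm, ← pow_one X, resultant_X_pow_left _ _ _ hg, pow_one, pow_one]
      at this
  obtain ⟨k, rfl⟩ := Nat.exists_eq_add_of_le hu
  rw [add_right_comm, resultant_add_left_deg _ _ _ _ _ (by rw [natDegree_X_mul hu0]),
    resultant_add_left_deg _ _ _ _ _ le_rfl, hXu]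
  ring

theorem coeff_zero_dvd_resultant_sub {f g : R[X]} {m n : ℕ} (hf : f.natDegree ≤ m + 1)
    (hg : g.natDegree ≤ n) :
    f.coeff 0 ∣ f.resultant g (m + 1) n - g.coeff 0 * f.divX.resultant g m n := by
  set φ := Ideal.Quotient.mk (Ideal.span {f.coeff 0})
  have hfX : f.map φ = X * f.divX.map φ :=
    calc f.map φ = (X * f.divX + C (f.coeff 0)).map φ := by rw [X_mul_divX_add]
      _ = X * f.divX.map φ := by
        rw [Polynomial.map_add, Polynomial.map_mul, map_X, map_C,
          Ideal.Quotient.eq_zero_iff_mem.mpr (Ideal.mem_span_singleton_self _), C_0, add_zero]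
  rw [← Ideal.mem_span_singleton, ← Ideal.Quotient.eq_zero_iff_mem, map_sub, map_mul,
    ← resultant_map_map, ← resultant_map_map, hfX, resultant_X_mul_left, coeff_map, sub_self]
  · exact natDegree_map_le.trans (by rw [natDegree_divX_eq_natDegree_tsub_one]; omega)
  · exact natDegree_map_le.trans hg

theorem dvd_resultant_of_dvd_coeff_zero {p : R} {f g : R[X]} {m n : ℕ}
    (hf : f.natDegree ≤ m + 1) (hg : g.natDegree ≤ n) (hpf : p ∣ f.coeff 0)
    (hpg : p ∣ g.coeff 0) : p ∣ f.resultant g (m + 1) n :=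
  (dvd_sub_left (dvd_mul_of_dvd_left hpg _)).mp
    (hpf.trans (coeff_zero_dvd_resultant_sub hf hg))

theorem sq_dvd_resultant_derivative {p : R} {f : R[X]} {m : ℕ} (hm : 1 ≤ m)
    (hf : f.natDegree ≤ m + 1) (h1 : p ∣ f.coeff 1) (h0 : p ^ 2 ∣ f.coeff 0) :
    p ^ 2 ∣ f.resultant (derivative f) (m + 1) m := by
  have hf' : (derivative f).natDegree ≤ m := (natDegree_derivative_le f).trans (by omega)
  have hf'0 : (derivative f).coeff 0 = f.coeff 1 := by simp [coeff_derivative]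
  obtain ⟨k, rfl⟩ := Nat.exists_eq_add_of_le' hm
  have hdivX : p ∣ f.divX.resultant (derivative f) (k + 1) (k + 1) :=
    dvd_resultant_of_dvd_coeff_zero (by rw [natDegree_divX_eq_natDegree_tsub_one]; omega) hf'
      (by rwa [coeff_divX]) (by rwa [hf'0])
  have hsub := h0.trans (coeff_zero_dvd_resultant_sub hf hf')
  rw [hf'0] at hsub
  exact (dvd_sub_left (pow_two p ▸ mul_dvd_mul h1 hdivX)).mp hsub

end Polynomial

theorem dvr_sq_dvd_resultant_general (R : Type*) [CommRing R] (π : R)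
    (n : ℕ) (hn : 1 ≤ n) (f : Polynomial R)
    (hdeg : f.natDegree = 2 * n + 1)
    (h1 : π ∣ f.coeff 1) (h0 : π ^ 2 ∣ f.coeff 0) :
    π ^ 2 ∣ resultant (2 * n + 1) (2 * n) f (Polynomial.derivative f) := by
  rw [resultant_eq_polynomial_resultant]
  exact Polynomial.sq_dvd_resultant_derivative (by omega) hdeg.le h1 h0

/-- Let `R` be a DVR with uniformizer `π` and let
`f = X^(2n+1) + a_{2n} X^(2n) + ⋯ + a₁ X + a₀` be monic of odd degree `2n+1`
with `π ∣ a₁` and `π² ∣ a₀`.  Then `π²` divides `Res(f, f')`. -/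
theorem dvr_sq_dvd_resultant (R : Type*) [CommRing R] [IsDomain R]
    [IsDiscreteValuationRing R] (π : R) (hπ : Irreducible π)
    (n : ℕ) (hn : 1 ≤ n) (f : Polynomial R) (hmonic : f.Monic)
    (hdeg : f.natDegree = 2 * n + 1)
    (h1 : π ∣ f.coeff 1) (h0 : π ^ 2 ∣ f.coeff 0) :
    π ^ 2 ∣ resultant (2 * n + 1) (2 * n) f (Polynomial.derivative f) :=
  dvr_sq_dvd_resultant_general R π n hn f hdeg h1 h0
end

section
/- Let R be a discrete valuation ring with uniformizer π and let f = X^{2n+1} + a_{2n}X^{2n} + ⋯ + a₁X + a₀ ∈ R[X] be a monic polynomial of odd degree 2n+1 (n ≥ 1) such that π divides each of a₀, a₁ and a₂. Then π² divides Res(f, f'), the resultant of f and its derivative f'. -/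
/-!
The last two columns of the Sylvester matrix of `f` and `f'` contain, besides zeros, only the
coefficients `a₀, a₁` of `f` and `a₁, 2a₂` of `f'`. Both columns are therefore divisible by `π`,
and pulling `π` out of each of them shows `π² ∣ det`.
-/

open Polynomial

theorem Matrix.pow_card_dvd_det_of_dvd_cols {ι R : Type*} [Fintype ι] [DecidableEq ι] [CommRing R]
    (M : Matrix ι ι R) (p : R) (s : Finset ι) (h : ∀ j ∈ s, ∀ i, p ∣ M i j) :
    p ^ s.card ∣ M.det := by
  choose w hw using h
  let N : Matrix ι ι R := Matrix.of fun i j => if hj : j ∈ s then w j hj i else M i j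
  have hM : M = N * Matrix.diagonal fun j => if j ∈ s then p else 1 := by
    ext i j
    by_cases hj : j ∈ s <;> simp [N, hj, mul_comm, hw]
  rw [hM, Matrix.det_mul, Matrix.det_diagonal, Finset.prod_ite_mem, Finset.univ_inter,
    Finset.prod_const]
  exact dvd_mul_left _ _

theorem dvd_sylvester_of_dvd_coeff {R : Type*} [CommRing R] {m n : ℕ} {f g : R[X]} {p : R}
    (j : Fin (m + n)) (hf : ∀ k, k + j < m + n → p ∣ f.coeff k)
    (hg : ∀ k, k + j < m + n → p ∣ g.coeff k) (i : Fin (m + n)) :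
    p ∣ _root_.sylvester m n f g i j := by
  simp only [_root_.sylvester, Matrix.of_apply]
  split_ifs
  · exact hf _ (by omega)
  · exact dvd_zero _
  · exact hg _ (by omega)
  · exact dvd_zero _

theorem dvr_sq_dvd_resultant_of_three_low_coeffs_general (R : Type*) [CommRing R] (π : R)
    (n : ℕ) (hn : 1 ≤ n) (f : Polynomial R)
    (h0 : π ∣ f.coeff 0) (h1 : π ∣ f.coeff 1) (h2 : π ∣ f.coeff 2) :
    π ^ 2 ∣ resultant (2 * n + 1) (2 * n) f (Polynomial.derivative f) := by
  have hf : ∀ k ≤ 1, π ∣ f.coeff k := by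
    intro k hk
    interval_cases k <;> assumption
  have hf' : ∀ k ≤ 1, π ∣ (derivative f).coeff k := by
    intro k hk
    rw [coeff_derivative]
    interval_cases k
    exacts [h1.mul_right _, h2.mul_right _]
  let cols : Finset (Fin (2 * n + 1 + 2 * n)) := {⟨4 * n - 1, by omega⟩, ⟨4 * n, by omega⟩}
  have hcard : cols.card = 2 := Finset.card_pair (by simp [Fin.ext_iff]; omega)
  calc π ^ 2 = π ^ cols.card := by rw [hcard]
    _ ∣ resultant (2 * n + 1) (2 * n) f (derivative f) := by
      refine Matrix.pow_card_dvd_det_of_dvd_cols _ π cols fun j hj => ?_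
      have hj : 4 * n - 1 ≤ (j : ℕ) := by
        simp only [cols, Finset.mem_insert, Finset.mem_singleton] at hj
        rcases hj with rfl | rfl <;> simp
      exact dvd_sylvester_of_dvd_coeff j (fun k hk => hf k (by omega))
        fun k hk => hf' k (by omega)

/-- Let `R` be a DVR with uniformizer `π` and let
`f = X^(2n+1) + a_{2n} X^(2n) + ⋯ + a₁ X + a₀` be monic of odd degree `2n+1`
with `π` dividing each of `a₀`, `a₁` and `a₂`.  Then `π²` divides `Res(f, f')`. -/
theorem dvr_sq_dvd_resultant_of_three_low_coeffs (R : Type*) [CommRing R] [IsDomain R]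
    [IsDiscreteValuationRing R] (π : R) (hπ : Irreducible π)
    (n : ℕ) (hn : 1 ≤ n) (f : Polynomial R) (hmonic : f.Monic)
    (hdeg : f.natDegree = 2 * n + 1)
    (h0 : π ∣ f.coeff 0) (h1 : π ∣ f.coeff 1) (h2 : π ∣ f.coeff 2) :
    π ^ 2 ∣ resultant (2 * n + 1) (2 * n) f (Polynomial.derivative f) :=
  dvr_sq_dvd_resultant_of_three_low_coeffs_general R π n hn f h0 h1 h2
end
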